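/- arXiv:1710.04447 — 3 statements merged into one kernel-verified Lean document; each statement's English description precedes it below -/
import Mathlib

section
/- Let |c₀⟩, |c₁⟩ be unit vectors in ℂ² with 0 < |⟨c₀|c₁⟩| < 1. There is no unitary U on ℂ²⊗ℂ² and phases φ_{kl} such that U|c₀c₀⟩ = e^{iφ₀₀}|c₀c₀⟩, U|c₁c₁⟩ = e^{iφ₁₁}|c₁c₀⟩, U|c₀c₁⟩ = e^{iφ₀₁}|c₀c₁⟩, and U|c₁c₀⟩ = e^{iφ₁₀}|c₁c₁⟩ (i.e., no 'CNOT-like' superposition-free unitary exists for non-orthogonal, non-parallel free states). -/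
open Matrix

/-- The inner product ⟨x|y⟩ on ℂ². -/
noncomputable def inp (x y : Fin 2 → ℂ) : ℂ := star x ⬝ᵥ y

/-- The tensor product a ⊗ b of two vectors of ℂ², as a vector of ℂ²⊗ℂ². -/
def tv (a b : Fin 2 → ℂ) : Fin 2 × Fin 2 → ℂ := fun p => a p.1 * b p.2

/-!
Unitarity preserves inner products. Since `⟨c₀c₀|c₁c₁⟩ = ⟨c₀|c₁⟩²` while the images
`e^{iφ₀₀}|c₀c₀⟩` and `e^{iφ₁₁}|c₁c₀⟩` have inner product `⟨c₀|c₁⟩` up to a phase,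
`|⟨c₀|c₁⟩|² = |⟨c₀|c₁⟩|`, which forces `⟨c₀|c₁⟩` to be `0` or of modulus `1`.
-/

theorem Matrix.star_mulVec_dotProduct_mulVec_of_mem_unitaryGroup {n α : Type*} [Fintype n]
    [DecidableEq n] [CommRing α] [StarRing α] {U : Matrix n n α}
    (hU : U ∈ unitaryGroup n α) (x y : n → α) :
    star (U *ᵥ x) ⬝ᵥ (U *ᵥ y) = star x ⬝ᵥ y := by
  rw [star_mulVec, dotProduct_mulVec, vecMul_vecMul, (show Uᴴ * U = 1 from hU.1),
    vecMul_one]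

theorem star_tv_dotProduct_tv (a b c d : Fin 2 → ℂ) :
    star (tv a b) ⬝ᵥ tv c d = inp a c * inp b d := by
  simp only [inp, dotProduct, tv, Pi.star_apply, star_mul', Fintype.sum_prod_type,
    Finset.sum_mul_sum]
  refine Finset.sum_congr rfl fun i _ => Finset.sum_congr rfl fun j _ => ?_
  ring

theorem inp_mul_inp_eq_of_mulVec_tv {c₀ c₁ : Fin 2 → ℂ} (hc₀ : inp c₀ c₀ = 1)
    {U : Matrix (Fin 2 × Fin 2) (Fin 2 × Fin 2) ℂ} (hU : U ∈ unitaryGroup (Fin 2 × Fin 2) ℂ)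
    {α β : ℂ} (h₀₀ : U *ᵥ tv c₀ c₀ = α • tv c₀ c₀) (h₁₁ : U *ᵥ tv c₁ c₁ = β • tv c₁ c₀) :
    inp c₀ c₁ * inp c₀ c₁ = star α * β * inp c₀ c₁ := by
  calc inp c₀ c₁ * inp c₀ c₁ = star (tv c₀ c₀) ⬝ᵥ tv c₁ c₁ := (star_tv_dotProduct_tv ..).symm
    _ = star (U *ᵥ tv c₀ c₀) ⬝ᵥ (U *ᵥ tv c₁ c₁) :=
      (star_mulVec_dotProduct_mulVec_of_mem_unitaryGroup hU _ _).symm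
    _ = star α * β * inp c₀ c₁ := by
      rw [h₀₀, h₁₁, star_smul, smul_dotProduct, dotProduct_smul, star_tv_dotProduct_tv, hc₀,
        smul_eq_mul, smul_eq_mul]
      ring

theorem stmt_1_general (c₀ c₁ : Fin 2 → ℂ) (h₀ : inp c₀ c₀ = 1)
    (hlow : 0 < ‖inp c₀ c₁‖) (hup : ‖inp c₀ c₁‖ < 1) :
    ¬ ∃ (U : Matrix (Fin 2 × Fin 2) (Fin 2 × Fin 2) ℂ) (φ₀₀ φ₁₁ φ₀₁ φ₁₀ : ℝ),
      U ∈ Matrix.unitaryGroup (Fin 2 × Fin 2) ℂ ∧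
      U.mulVec (tv c₀ c₀) = Complex.exp (Complex.I * φ₀₀) • tv c₀ c₀ ∧
      U.mulVec (tv c₁ c₁) = Complex.exp (Complex.I * φ₁₁) • tv c₁ c₀ ∧
      U.mulVec (tv c₀ c₁) = Complex.exp (Complex.I * φ₀₁) • tv c₀ c₁ ∧
      U.mulVec (tv c₁ c₀) = Complex.exp (Complex.I * φ₁₀) • tv c₁ c₁ := by
  rintro ⟨U, φ₀₀, φ₁₁, -, -, hU, h₀₀, h₁₁, -, -⟩
  have hnorm := congrArg norm (inp_mul_inp_eq_of_mulVec_tv h₀ hU h₀₀ h₁₁)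
  simp only [norm_mul, norm_star, Complex.norm_exp_I_mul_ofReal, one_mul] at hnorm
  exact hup.ne (mul_left_cancel₀ hlow.ne' (hnorm.trans (mul_one _).symm))

/-- No "CNOT-like" superposition-free unitary exists for non-orthogonal,
non-parallel free states |c₀⟩, |c₁⟩. -/
theorem stmt_1 (c₀ c₁ : Fin 2 → ℂ) (h₀ : inp c₀ c₀ = 1) (h₁ : inp c₁ c₁ = 1)
    (hlow : 0 < ‖inp c₀ c₁‖) (hup : ‖inp c₀ c₁‖ < 1) :
    ¬ ∃ (U : Matrix (Fin 2 × Fin 2) (Fin 2 × Fin 2) ℂ) (φ₀₀ φ₁₁ φ₀₁ φ₁₀ : ℝ),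
      U ∈ Matrix.unitaryGroup (Fin 2 × Fin 2) ℂ ∧
      U.mulVec (tv c₀ c₀) = Complex.exp (Complex.I * φ₀₀) • tv c₀ c₀ ∧
      U.mulVec (tv c₁ c₁) = Complex.exp (Complex.I * φ₁₁) • tv c₁ c₀ ∧
      U.mulVec (tv c₀ c₁) = Complex.exp (Complex.I * φ₀₁) • tv c₀ c₁ ∧
      U.mulVec (tv c₁ c₀) = Complex.exp (Complex.I * φ₁₀) • tv c₁ c₁ :=
  stmt_1_general c₀ c₁ h₀ hlow hup
end

section
/- For a single-qubit density matrix ρ = [[ρ₀₀, ρ₀₁],[ρ₁₀, ρ₁₁]], the trace-norm distance from ρ to the set of diagonal (incoherent) density matrices equals the ℓ₁-norm of coherence: min over diagonal density matrices σ of ‖ρ − σ‖₁ = 2|ρ₀₁|. -/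
open Matrix
open scoped ComplexOrder

/-- The trace norm ‖M‖₁ = Tr√(M†M). -/
noncomputable def traceNorm {n : Type*} [Fintype n] [DecidableEq n]
    (M : Matrix n n ℂ) : ℝ :=
  (((Matrix.posSemidef_conjTranspose_mul_self M).1.eigenvectorUnitary : Matrix n n ℂ) *
      diagonal (((↑) : ℝ → ℂ) ∘ Real.sqrt ∘ (Matrix.posSemidef_conjTranspose_mul_self M).1.eigenvalues) *
      (star (Matrix.posSemidef_conjTranspose_mul_self M).1.eigenvectorUnitary : Matrix n n ℂ)).trace.re

/-- A density matrix: positive semidefinite with unit trace. -/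
def IsDensity {n : Type*} [Fintype n] (ρ : Matrix n n ℂ) : Prop :=
  ρ.PosSemidef ∧ ρ.trace = 1

/-!
For a diagonal density matrix σ, the difference ρ − σ is a traceless Hermitian qubit matrix
[[a, b], [b̄, −a]] with a = ρ₀₀ − σ₀₀ real and b = ρ₀₁. Its square is the scalar (a² + |b|²)·1,
so both singular values equal √(a² + |b|²) and ‖ρ − σ‖₁ = 2√(a² + |b|²). This is at least 2|b|,
with equality for a = 0, i.e. for σ the diagonal part of ρ.
-/

theorem traceNorm_eq_re_trace_cfc_sqrt {n : Type*} [Fintype n] [DecidableEq n]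
    (M : Matrix n n ℂ) : traceNorm M = (cfc Real.sqrt (Mᴴ * M)).trace.re := by
  rw [(posSemidef_conjTranspose_mul_self M).1.cfc_eq]
  rfl

theorem traceNorm_eq_of_conjTranspose_mul_self_eq_algebraMap {n : Type*} [Fintype n]
    [DecidableEq n] {M : Matrix n n ℂ} {c : ℝ} (hc : 0 ≤ c)
    (h : Mᴴ * M = algebraMap ℝ (Matrix n n ℂ) (c ^ 2)) :
    traceNorm M = Fintype.card n * c := by
  rw [traceNorm_eq_re_trace_cfc_sqrt, h, cfc_algebraMap, Real.sqrt_sq hc,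
    algebraMap_eq_diagonal, trace_diagonal]
  simp

theorem Matrix.IsHermitian.conjTranspose_mul_self_eq_of_trace_eq_zero
    {M : Matrix (Fin 2) (Fin 2) ℂ} (hM : M.IsHermitian) (htr : M.trace = 0) :
    Mᴴ * M = algebraMap ℝ (Matrix (Fin 2) (Fin 2) ℂ) ((M 0 0).re ^ 2 + ‖M 0 1‖ ^ 2) := by
  have h11 : M 1 1 = -M 0 0 := by
    rw [trace_fin_two] at htr
    linear_combination htr
  have hform : M = !![((M 0 0).re : ℂ), M 0 1; star (M 0 1), -((M 0 0).re : ℂ)] := by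
    have h00 : ((M 0 0).re : ℂ) = M 0 0 := hM.coe_re_apply_self 0
    rw [h00, hM.apply 1 0, ← h11]
    exact eta_fin_two M
  rw [hM.eq, hform]
  ext i j
  fin_cases i <;> fin_cases j <;>
    simp [mul_apply, algebraMap_eq_diagonal, Complex.mul_conj',
      Complex.conj_mul'] <;> ring

theorem Matrix.IsHermitian.traceNorm_eq_of_trace_eq_zero {M : Matrix (Fin 2) (Fin 2) ℂ}
    (hM : M.IsHermitian) (htr : M.trace = 0) :
    traceNorm M = 2 * √((M 0 0).re ^ 2 + ‖M 0 1‖ ^ 2) := by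
  have hsq := hM.conjTranspose_mul_self_eq_of_trace_eq_zero htr
  rw [← Real.sq_sqrt (by positivity : 0 ≤ (M 0 0).re ^ 2 + ‖M 0 1‖ ^ 2)] at hsq
  simp [traceNorm_eq_of_conjTranspose_mul_self_eq_algebraMap (Real.sqrt_nonneg _) hsq]

theorem IsDensity.diagonal_diag {n : Type*} [Fintype n] [DecidableEq n]
    {ρ : Matrix n n ℂ} (hρ : IsDensity ρ) : IsDensity (diagonal ρ.diag) :=
  ⟨PosSemidef.diagonal fun _ => hρ.1.diag_nonneg, by rw [trace_diagonal]; exact hρ.2⟩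

theorem IsDensity.traceNorm_sub_of_isDiag {ρ σ : Matrix (Fin 2) (Fin 2) ℂ}
    (hρ : IsDensity ρ) (hσ : IsDensity σ) (hσd : σ.IsDiag) :
    traceNorm (ρ - σ) = 2 * √((ρ 0 0 - σ 0 0).re ^ 2 + ‖ρ 0 1‖ ^ 2) := by
  have htr : (ρ - σ).trace = 0 := by rw [trace_sub, hρ.2, hσ.2, sub_self]
  rw [(hρ.1.1.sub hσ.1.1).traceNorm_eq_of_trace_eq_zero htr, Matrix.sub_apply, Matrix.sub_apply,
    hσd (by decide : (0 : Fin 2) ≠ 1), sub_zero]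

/-- For a qubit density matrix, the minimal trace-norm distance to the diagonal
(incoherent) density matrices equals the ℓ₁-norm of coherence 2|ρ₀₁|. -/
theorem stmt_6 (ρ : Matrix (Fin 2) (Fin 2) ℂ) (hρ : IsDensity ρ) :
    IsLeast {x : ℝ | ∃ σ : Matrix (Fin 2) (Fin 2) ℂ,
        IsDensity σ ∧ σ.IsDiag ∧ x = traceNorm (ρ - σ)}
      (2 * ‖ρ 0 1‖) := by
  constructor
  · refine ⟨diagonal ρ.diag, hρ.diagonal_diag, isDiag_diagonal _, ?_⟩
    rw [hρ.traceNorm_sub_of_isDiag hρ.diagonal_diag (isDiag_diagonal _)]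
    simp [Real.sqrt_sq]
  · rintro x ⟨σ, hσ, hσd, rfl⟩
    rw [hρ.traceNorm_sub_of_isDiag hσ hσd]
    gcongr
    exact Real.le_sqrt_of_sq_le (le_add_of_nonneg_left (sq_nonneg _))
end

section
/- Let ρ = cos²θ|0⟩⟨0| + cosθ sinθ(|0⟩⟨1|+|1⟩⟨0|) + sin²θ|1⟩⟨1| be a pure qubit state and σ = |0⟩⟨0|. Applying the CNOT unitary U (U|x⟩|y⟩ = |x⟩|y⊕x⟩ in the computational basis) to ρ⊗σ yields the pure state |Ψ⟩ = cosθ|00⟩ + sinθ|11⟩, whose concurrence equals |2 cosθ sinθ| = |sin 2θ|, which equals the ℓ₁-norm of coherence of ρ. -/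
/-!
Both ρ = |φ⟩⟨φ|, with φ = cos θ|0⟩ + sin θ|1⟩, and σ = |0⟩⟨0| are pure, so ρ ⊗ σ is the projector
onto φ ⊗ |0⟩, and conjugating it by CNOT gives the projector onto CNOT(φ ⊗ |0⟩). On a target in
state |0⟩, CNOT copies the control's basis label, which produces cos θ|00⟩ + sin θ|11⟩. The
remaining identities are sin 2θ = 2 sin θ cos θ.
-/

open Matrix Kronecker

/-- The CNOT unitary on ℂ²⊗ℂ², U|x⟩|y⟩ = |x⟩|x⊕y⟩, as a matrix. -/
def CNOT : Matrix (Fin 2 × Fin 2) (Fin 2 × Fin 2) ℂ :=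
  Matrix.of fun a b => if a.1 = b.1 ∧ a.2 = b.1 + b.2 then 1 else 0

namespace Matrix

variable {α m n : Type*} [CommSemiring α] [StarRing α]

theorem mul_vecMulVec_star_mul_conjTranspose [Fintype n]
    (U : Matrix m n α) (v : n → α) :
    U * vecMulVec v (star v) * Uᴴ = vecMulVec (U *ᵥ v) (star (U *ᵥ v)) := by
  rw [mul_vecMulVec, vecMulVec_mul, star_mulVec]

theorem kronecker_vecMulVec_star (u : m → α) (v : n → α) :
    vecMulVec u (star u) ⊗ₖ vecMulVec v (star v) =
      vecMulVec (fun p => u p.1 * v p.2) (star fun p => u p.1 * v p.2) := by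
  ext ⟨i, k⟩ ⟨j, l⟩
  simp only [kroneckerMap_apply, vecMulVec_apply, Pi.star_apply, star_mul']
  ring

end Matrix

theorem CNOT_mulVec_apply (v : Fin 2 × Fin 2 → ℂ) (x y : Fin 2) :
    (CNOT *ᵥ v) (x, y) = v (x, y - x) := by
  have key : ∀ b : Fin 2 × Fin 2, (x = b.1 ∧ y = b.1 + b.2) ↔ (x, y - x) = b := by
    rintro ⟨b₁, b₂⟩
    constructor
    · rintro ⟨rfl, rfl⟩; simp
    · intro h; cases h; simp
  simp [mulVec, dotProduct, CNOT, key]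

theorem CNOT_mulVec_ket_zero (φ : Fin 2 → ℂ) (x y : Fin 2) :
    (CNOT *ᵥ fun p => φ p.1 * ![1, 0] p.2) (x, y) = if y = x then φ x else 0 := by
  rw [CNOT_mulVec_apply]
  fin_cases x <;> fin_cases y <;> simp

theorem vecMulVec_star_ofReal (a b : ℝ) :
    vecMulVec ![(a : ℂ), b] (star ![(a : ℂ), b]) = !![(a : ℂ) ^ 2, a * b; b * a, b ^ 2] := by
  ext i j
  fin_cases i <;> fin_cases j <;> simp [vecMulVec_apply, sq]

theorem Real.two_mul_abs_cos_mul_sin (θ : ℝ) :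
    2 * |Real.cos θ * Real.sin θ| = |Real.sin (2 * θ)| := by
  rw [Real.sin_two_mul, abs_mul, abs_mul, abs_mul, abs_two]
  ring

/-- Applying CNOT to ρ⊗σ with ρ = [[cos²θ, cosθsinθ],[sinθcosθ, sin²θ]] and
σ = |0⟩⟨0| yields the pure state |Ψ⟩ = cosθ|00⟩ + sinθ|11⟩, whose concurrence
2|cosθ sinθ| = |sin 2θ| equals the ℓ₁-norm of coherence 2|ρ₀₁| of ρ. -/
theorem stmt_14 (θ : ℝ)
    (ρ : Matrix (Fin 2) (Fin 2) ℂ)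
    (hρ : ρ = !![((Real.cos θ : ℂ)) ^ 2, (Real.cos θ : ℂ) * (Real.sin θ : ℂ);
      (Real.sin θ : ℂ) * (Real.cos θ : ℂ), ((Real.sin θ : ℂ)) ^ 2])
    (σ : Matrix (Fin 2) (Fin 2) ℂ) (hσ : σ = !![(1 : ℂ), 0; 0, 0])
    (Ψ : Fin 2 × Fin 2 → ℂ)
    (hΨ : Ψ = fun q => if q = (0, 0) then (Real.cos θ : ℂ)
      else if q = (1, 1) then (Real.sin θ : ℂ) else 0) :
    CNOT * (ρ ⊗ₖ σ) * CNOTᴴ = Matrix.vecMulVec Ψ (star Ψ) ∧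
    2 * |Real.cos θ * Real.sin θ| = |Real.sin (2 * θ)| ∧
    |Real.sin (2 * θ)| = 2 * ‖ρ 0 1‖ := by
  have hσ_pure : σ = vecMulVec ![1, 0] (star ![1, 0]) := by
    rw [hσ]
    ext i j
    fin_cases i <;> fin_cases j <;> simp [vecMulVec_apply]
  have hΨ_cnot : CNOT *ᵥ (fun p => ![(Real.cos θ : ℂ), Real.sin θ] p.1 * ![1, 0] p.2) = Ψ := by
    ext ⟨x, y⟩
    rw [CNOT_mulVec_ket_zero, hΨ]
    fin_cases x <;> fin_cases y <;> simp
  have hρ01 : ‖ρ 0 1‖ = |Real.cos θ * Real.sin θ| := by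
    rw [hρ, ← Complex.ofReal_mul]
    exact Complex.norm_real _
  refine ⟨?_, Real.two_mul_abs_cos_mul_sin θ, by rw [hρ01, Real.two_mul_abs_cos_mul_sin]⟩
  rw [hρ, hσ_pure, ← vecMulVec_star_ofReal, kronecker_vecMulVec_star,
    mul_vecMulVec_star_mul_conjTranspose, hΨ_cnot]
end
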